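/- arXiv:2604.21176 — 3 statements merged into one kernel-verified Lean document; each statement's English description precedes it below -/
import Mathlib

section
/- Leibniz rule for higher covariant derivatives: if α ∈ C∞(E), β ∈ C∞(F), and v ∈ C∞(⊗^j TM), then (∇⊗∇̄)^j_v(α ⊗_{C∞(M)} β) = (∇^{j−•}_{v_{(1)}} α) ⊗_{C∞(M)} (∇̄^•_{v_{(2)}} β), where Δv = v_{(1)} ⊗ v_{(2)} is the tensor coproduct in Sweedler notation and • is the tensor degree of v_{(2)}. -/
/-!
Algebraic framework for manifolds with connection:
`R` plays the role of the ring of smooth functions `C^∞(M)`,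
`V` the `C^∞(M)`-module of smooth vector fields `C^∞(TM)`,
`VFAct` the action of vector fields on functions as derivations,
`Conn` a connection (covariant derivative) on the module of sections `E`
of a vector bundle, and `hcd` the higher covariant derivative defined
inductively by
`∇^{j+1}_{X₀,…,X_j} α = ∇_{X₀}(∇^j_{X₁,…,X_j} α) − Σ_k ∇^j_{X₁,…,∇̂_{X₀}X_k,…,X_j} α`.
-/

open TensorProduct

/-- The action of vector fields on smooth functions as (ℝ-linear) derivations. -/
structure VFAct (R : Type*) [CommRing R] [Algebra ℝ R]
    (V : Type*) [AddCommGroup V] [Module R V] where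
  act : V → R → R
  act_add_right : ∀ X f g, act X (f + g) = act X f + act X g
  act_mul_right : ∀ X f g, act X (f * g) = act X f * g + f * act X g
  act_add_left : ∀ X Y f, act (X + Y) f = act X f + act Y f
  act_smul_left : ∀ (f : R) X g, act (f • X) g = f * act X g
  act_algebraMap : ∀ X (r : ℝ), act X (algebraMap ℝ R r) = 0

/-- A connection (covariant derivative) on the `R = C^∞(M)`-module `E` of sections of a
smooth vector bundle, relative to the action `D` of vector fields on functions. -/
structure Conn (R : Type*) [CommRing R] [Algebra ℝ R]
    (V : Type*) [AddCommGroup V] [Module R V]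
    (E : Type*) [AddCommGroup E] [Module R E]
    (D : VFAct R V) where
  d : V → E → E
  d_add_right : ∀ X α β, d X (α + β) = d X α + d X β
  d_smul_right : ∀ X (f : R) α, d X (f • α) = D.act X f • α + f • d X α
  d_add_left : ∀ X Y α, d (X + Y) α = d X α + d Y α
  d_smul_left : ∀ (f : R) X α, d (f • X) α = f • d X α

variable {R : Type*} [CommRing R] [Algebra ℝ R]
variable {V : Type*} [AddCommGroup V] [Module R V]

/-- The higher covariant derivative `∇^j_{X₁,…,X_j}` along a tuple of vector fields,
defined inductively by
`∇^{j+1}_{X₀,…,X_j} α = ∇_{X₀}(∇^j_{X₁,…,X_j} α) − Σ_k ∇^j_{X₁,…,∇̂_{X₀}X_k,…,X_j} α`. -/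
def hcd {E : Type*} [AddCommGroup E] [Module R E] {D : VFAct R V}
    (cT : Conn R V V D) (cE : Conn R V E D) : (j : ℕ) → (Fin j → V) → E → E
  | 0, _, α => α
  | j + 1, X, α =>
      cE.d (X 0) (hcd cT cE j (fun k => X k.succ) α)
        - ∑ k : Fin j,
            hcd cT cE j (Function.update (fun m => X m.succ) k (cT.d (X 0) (X k.succ))) α

/-- The connection `∇̂` is torsion-free: `∇̂_X Y − ∇̂_Y X = [X,Y]`, where the Lie bracket
is characterized by its action on functions. -/
def TorsionFree {D : VFAct R V} (cT : Conn R V V D) : Prop :=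
  ∀ X Y f, D.act (cT.d X Y - cT.d Y X) f = D.act X (D.act Y f) - D.act Y (D.act X f)
/-!
Tensor-field machinery: `TensorAlgebra R V` plays the role of the space
`C^∞(⊗(TM))` of smooth contravariant tensor fields of globally finite order,
`comul` is the tensor coproduct `Δ` (the unique morphism of `R`-algebras with
`Δ X = X ⊗ 1 + 1 ⊗ X` for vector fields `X`), `IsDerivExt` says that a
connection on an algebra of sections is the Leibniz extension of a connection
on its generators, `IsHigherDeriv` characterizes the tensorial extension
`v ↦ ∇^j_v` (for `v ∈ C^∞(⊗^j TM)`) of the higher covariant derivative, via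
`∇^0_f = f·` and `∇^{j+1}_{X₀⊗w} = ∇_{X₀} ∘ ∇^j_w − ∇^j_{∇̂_{X₀} w}`,
and `IsHomConn` characterizes the induced connection on a Hom-bundle. -/

/-- The tensor coproduct on `C^∞(⊗(TM))`: the unique morphism of `R`-algebras
(for the tensor product) with `Δ X = X ⊗ 1 + 1 ⊗ X` for vector fields `X`. -/
noncomputable def comul (R : Type*) (V : Type*) [CommRing R] [AddCommGroup V] [Module R V] :
    TensorAlgebra R V →ₐ[R] TensorAlgebra R V ⊗[R] TensorAlgebra R V :=
  TensorAlgebra.lift R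
    { toFun := fun x => TensorAlgebra.ι R x ⊗ₜ[R] 1 + 1 ⊗ₜ[R] TensorAlgebra.ι R x
      map_add' := by
        intro x y
        simp only [map_add, TensorProduct.add_tmul, TensorProduct.tmul_add]
        abel
      map_smul' := by
        intro c x
        simp only [map_smul, RingHom.id_apply, TensorProduct.smul_tmul',
          TensorProduct.tmul_smul, smul_add] }

/-- `cB` is the Leibniz-rule extension of the connection `cE` to an algebra of sections `B`
generated by the image of `j : E → B`. -/
structure IsDerivExt {R : Type*} [CommRing R] [Algebra ℝ R]
    {V : Type*} [AddCommGroup V] [Module R V]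
    {E : Type*} [AddCommGroup E] [Module R E]
    {B : Type*} [Ring B] [Algebra R B] {D : VFAct R V}
    (cE : Conn R V E D) (cB : Conn R V B D) (j : E → B) : Prop where
  d_gen : ∀ X e, cB.d X (j e) = j (cE.d X e)
  d_mul : ∀ X a b, cB.d X (a * b) = cB.d X a * b + a * cB.d X b

/-- `N` is the tensorial extension `v ↦ ∇^j_v` of the higher covariant derivative of the
connection `cE`, where `v` ranges over tensor fields (`cA` is the Leibniz extension of the
connection on `TM` to `⊗(TM)`).  It is `C^∞(M)`-linear (tensorial) in `v`, satisfies
`∇^0_f α = f • α`, the inductive formula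
`∇_{X₀ ⊗ w} = ∇_{X₀} ∘ ∇_w − ∇_{∇̂_{X₀} w}`, and is ℝ-linear in the section. -/
structure IsHigherDeriv {R : Type*} [CommRing R] [Algebra ℝ R]
    {V : Type*} [AddCommGroup V] [Module R V]
    {E : Type*} [AddCommGroup E] [Module R E] {D : VFAct R V}
    (cE : Conn R V E D) (cA : Conn R V (TensorAlgebra R V) D)
    (N : TensorAlgebra R V →ₗ[R] E → E) : Prop where
  n_algebraMap : ∀ (f : R) (α : E), N (algebraMap R (TensorAlgebra R V) f) α = f • α
  n_mul_ι : ∀ (X : V) (w : TensorAlgebra R V) (α : E),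
      N (TensorAlgebra.ι R X * w) α = cE.d X (N w α) - N (cA.d X w) α
  n_add_right : ∀ v (α β : E), N v (α + β) = N v α + N v β
  n_smul_real : ∀ v (r : ℝ) (α : E), N v (algebraMap ℝ R r • α) = algebraMap ℝ R r • N v α

/-- `cH` is the connection on the Hom-bundle `Hom(E,F)` induced by `cE` and `cF`:
`(∇_X T)(α) = ∇^F_X (T α) − T (∇^E_X α)`. -/
def IsHomConn {R : Type*} [CommRing R] [Algebra ℝ R]
    {V : Type*} [AddCommGroup V] [Module R V]
    {E : Type*} [AddCommGroup E] [Module R E]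
    {F : Type*} [AddCommGroup F] [Module R F] {D : VFAct R V}
    (cE : Conn R V E D) (cF : Conn R V F D) (cH : Conn R V (E →ₗ[R] F) D) : Prop :=
  ∀ X T α, (cH.d X T) α = cF.d X (T α) - T (cE.d X α)

/-!
Both sides of the Leibniz rule are additive in `v`, so it suffices to treat `v` of pure degree `n`,
by induction on `n`. Writing `v = X ⊗ w`, the defining recursion
`∇_{X ⊗ w} = ∇_X ∘ ∇_w − ∇_{∇̂_X w}` reduces the claim to the one for `w` and for `∇̂_X w`,
both of degree `n`. The two correction terms match because `Δ` intertwines `∇̂_X` with the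
derivation `∇̂_X ⊗ 1 + 1 ⊗ ∇̂_X`, and the leading terms match because `Δ X = X ⊗ 1 + 1 ⊗ X`
and `∇ ⊗ ∇̄` obeys the Leibniz rule on pure tensors.
-/

namespace Conn

variable {E F : Type*} [AddCommGroup E] [Module R E] [AddCommGroup F] [Module R F]
  {D : VFAct R V}

lemma d_zero (c : Conn R V E D) (X : V) : c.d X 0 = 0 := by
  simpa using (c.d_add_right X 0 0).symm

noncomputable def tensorD (cE : Conn R V E D) (cF : Conn R V F D) (X : V) :
    E ⊗[R] F →+ E ⊗[R] F :=
  TensorProduct.liftAddHom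
    { toFun := fun a =>
        { toFun := fun b => cE.d X a ⊗ₜ[R] b + a ⊗ₜ[R] cF.d X b
          map_zero' := by simp [cF.d_zero]
          map_add' := fun b b' => by
            simp only [cF.d_add_right, TensorProduct.tmul_add]
            abel }
      map_zero' := by
        ext b
        simp [cE.d_zero]
      map_add' := fun a a' => by
        ext b
        simp only [cE.d_add_right, TensorProduct.add_tmul, AddMonoidHom.coe_mk,
          ZeroHom.coe_mk, AddMonoidHom.add_apply]
        abel }
    (fun r a b => by
      simp only [AddMonoidHom.coe_mk, ZeroHom.coe_mk, cE.d_smul_right, cF.d_smul_right,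
        TensorProduct.add_tmul, TensorProduct.tmul_add, TensorProduct.smul_tmul,
        TensorProduct.tmul_smul]
      abel)

@[simp] lemma tensorD_tmul (cE : Conn R V E D) (cF : Conn R V F D) (X : V) (a : E) (b : F) :
    cE.tensorD cF X (a ⊗ₜ[R] b) = cE.d X a ⊗ₜ[R] b + a ⊗ₜ[R] cF.d X b := by
  simp [tensorD]

end Conn

namespace IsDerivExt

variable {E B : Type*} [AddCommGroup E] [Module R E] [Ring B] [Algebra R B] {D : VFAct R V}
  {cE : Conn R V E D} {cB : Conn R V B D}

lemma d_one {j : E → B} (h : IsDerivExt cE cB j) (X : V) : cB.d X 1 = 0 := by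
  simpa using h.d_mul X 1 1

lemma d_algebraMap {j : E → B} (h : IsDerivExt cE cB j) (X : V) (r : R) :
    cB.d X (algebraMap R B r) = D.act X r • 1 := by
  rw [Algebra.algebraMap_eq_smul_one, cB.d_smul_right, h.d_one, smul_zero, add_zero]

lemma d_mem_range_pow {j : E →ₗ[R] B} (h : IsDerivExt cE cB j) (X : V) {n : ℕ} {v : B}
    (hv : v ∈ LinearMap.range j ^ n) : cB.d X v ∈ LinearMap.range j ^ n := by
  induction n generalizing v with
  | zero =>
    rw [pow_zero] at hv ⊢
    obtain ⟨r, rfl⟩ := Submodule.mem_one.mp hv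
    rw [h.d_algebraMap]
    exact Submodule.smul_mem _ _ (Submodule.mem_one.mpr ⟨1, map_one _⟩)
  | succ n ih =>
    rw [pow_succ'] at hv ⊢
    refine Submodule.mul_induction_on hv ?_ ?_
    · rintro _ ⟨e, rfl⟩ w hw
      rw [h.d_mul, h.d_gen]
      exact add_mem (Submodule.mul_mem_mul ⟨_, rfl⟩ hw)
        (Submodule.mul_mem_mul ⟨e, rfl⟩ (ih hw))
    · intro a b ha hb
      rw [cB.d_add_right]
      exact add_mem ha hb

lemma tensorD_mul {j : E → B} (h : IsDerivExt cE cB j) (X : V) (u w : B ⊗[R] B) :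
    cB.tensorD cB X (u * w) = cB.tensorD cB X u * w + u * cB.tensorD cB X w := by
  induction u with
  | zero => simp
  | add u u' hu hu' =>
    simp only [add_mul, map_add, hu, hu']
    abel
  | tmul a b =>
    induction w with
    | zero => simp
    | add w w' hw hw' =>
      simp only [mul_add, map_add, hw, hw']
      abel
    | tmul c e =>
      simp only [Algebra.TensorProduct.tmul_mul_tmul, Conn.tensorD_tmul, h.d_mul,
        TensorProduct.add_tmul, TensorProduct.tmul_add, add_mul, mul_add]
      abel

end IsDerivExt

omit [Algebra ℝ R] in
lemma comul_ι (X : V) :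
    comul R V (TensorAlgebra.ι R X) = TensorAlgebra.ι R X ⊗ₜ[R] 1 + 1 ⊗ₜ[R] TensorAlgebra.ι R X :=
  TensorAlgebra.lift_ι_apply _ _

section Leibniz

variable {D : VFAct R V} {cT : Conn R V V D} {cA : Conn R V (TensorAlgebra R V) D}

lemma IsDerivExt.comul_d (hA : IsDerivExt cT cA (TensorAlgebra.ι R)) (X : V)
    (v : TensorAlgebra R V) :
    comul R V (cA.d X v) = cA.tensorD cA X (comul R V v) := by
  induction v using TensorAlgebra.induction with
  | algebraMap r =>
    rw [hA.d_algebraMap, map_smul, map_one, AlgHom.commutes,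
      Algebra.TensorProduct.algebraMap_apply, Conn.tensorD_tmul, hA.d_algebraMap, hA.d_one,
      TensorProduct.tmul_zero, add_zero, Algebra.TensorProduct.one_def, TensorProduct.smul_tmul']
  | ι x =>
    simp only [hA.d_gen, comul_ι, map_add, Conn.tensorD_tmul, hA.d_one,
      TensorProduct.tmul_zero, TensorProduct.zero_tmul, add_zero, zero_add]
  | mul a b ha hb =>
    rw [hA.d_mul, map_add, map_mul, map_mul, map_mul, ha, hb, hA.tensorD_mul]
  | add a b ha hb =>
    rw [cA.d_add_right, map_add, map_add, ha, hb, map_add]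

variable {E F : Type*} [AddCommGroup E] [Module R E] [AddCommGroup F] [Module R F]

/-- Applied to `Δ v = v₍₁₎ ⊗ v₍₂₎`, this is `(∇_{v₍₁₎} α) ⊗ (∇̄_{v₍₂₎} β)`. -/
noncomputable def tensorEval (NE : TensorAlgebra R V →ₗ[R] E → E)
    (NF : TensorAlgebra R V →ₗ[R] F → F) (α : E) (β : F) :
    TensorAlgebra R V ⊗[R] TensorAlgebra R V →ₗ[R] E ⊗[R] F :=
  TensorProduct.map ((LinearMap.proj α : (E → E) →ₗ[R] E).comp NE)
    ((LinearMap.proj β : (F → F) →ₗ[R] F).comp NF)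

omit [Algebra ℝ R] in
@[simp] lemma tensorEval_tmul (NE : TensorAlgebra R V →ₗ[R] E → E)
    (NF : TensorAlgebra R V →ₗ[R] F → F) (α : E) (β : F) (a b : TensorAlgebra R V) :
    tensorEval NE NF α β (a ⊗ₜ[R] b) = NE a α ⊗ₜ[R] NF b β :=
  rfl

variable {cE : Conn R V E D} {cF : Conn R V F D} {cEF : Conn R V (E ⊗[R] F) D}
  {NE : TensorAlgebra R V →ₗ[R] E → E} {NF : TensorAlgebra R V →ₗ[R] F → F}
  {NEF : TensorAlgebra R V →ₗ[R] (E ⊗[R] F) → (E ⊗[R] F)}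

lemma tensorEval_comul_ι_mul
    (hEF : ∀ (X : V) (α : E) (β : F),
      cEF.d X (α ⊗ₜ[R] β) = cE.d X α ⊗ₜ[R] β + α ⊗ₜ[R] cF.d X β)
    (hNE : IsHigherDeriv cE cA NE) (hNF : IsHigherDeriv cF cA NF)
    (α : E) (β : F) (X : V) (u : TensorAlgebra R V ⊗[R] TensorAlgebra R V) :
    tensorEval NE NF α β (comul R V (TensorAlgebra.ι R X) * u)
      = cEF.d X (tensorEval NE NF α β u) - tensorEval NE NF α β (cA.tensorD cA X u) := by
  rw [comul_ι]
  induction u with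
  | zero => simp [cEF.d_zero]
  | add u u' hu hu' =>
    simp only [mul_add, map_add, hu, hu', cEF.d_add_right]
    abel
  | tmul a b =>
    simp only [add_mul, Algebra.TensorProduct.tmul_mul_tmul, one_mul, map_add,
      tensorEval_tmul, hNE.n_mul_ι, hNF.n_mul_ι, hEF, Conn.tensorD_tmul,
      TensorProduct.sub_tmul, TensorProduct.tmul_sub]
    abel

lemma IsHigherDeriv.leibniz_of_mem_range_ι_pow (hNEF : IsHigherDeriv cEF cA NEF)
    (hEF : ∀ (X : V) (α : E) (β : F),
      cEF.d X (α ⊗ₜ[R] β) = cE.d X α ⊗ₜ[R] β + α ⊗ₜ[R] cF.d X β)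
    (hA : IsDerivExt cT cA (TensorAlgebra.ι R))
    (hNE : IsHigherDeriv cE cA NE) (hNF : IsHigherDeriv cF cA NF) {n : ℕ} {v : TensorAlgebra R V}
    (hv : v ∈ LinearMap.range (TensorAlgebra.ι R : V →ₗ[R] TensorAlgebra R V) ^ n)
    (α : E) (β : F) :
    NEF v (α ⊗ₜ[R] β) = tensorEval NE NF α β (comul R V v) := by
  induction n generalizing v α β with
  | zero =>
    rw [pow_zero] at hv
    obtain ⟨r, rfl⟩ := Submodule.mem_one.mp hv
    rw [AlgHom.commutes, Algebra.TensorProduct.algebraMap_apply, tensorEval_tmul,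
      ← map_one (algebraMap R (TensorAlgebra R V)), hNEF.n_algebraMap, hNE.n_algebraMap,
      hNF.n_algebraMap, one_smul, TensorProduct.smul_tmul']
  | succ n ih =>
    rw [pow_succ'] at hv
    refine Submodule.mul_induction_on hv ?_ ?_ α β
    · rintro _ ⟨X, rfl⟩ w hw α β
      rw [hNEF.n_mul_ι, ih hw, ih (hA.d_mem_range_pow X hw), hA.comul_d, map_mul,
        tensorEval_comul_ι_mul hEF hNE hNF]
    · intro a b ha hb α β
      simp only [map_add, Pi.add_apply, ha, hb]

end Leibniz

/-- Leibniz rule for higher covariant derivatives.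
If `α ∈ C^∞(E)`, `β ∈ C^∞(F)` and `v ∈ C^∞(⊗^j TM)`, then
`(∇⊗∇̄)^j_v (α ⊗ β) = (∇^{j−•}_{v₍₁₎} α) ⊗ (∇̄^•_{v₍₂₎} β)`, where `Δ v = v₍₁₎ ⊗ v₍₂₎`
is the tensor coproduct.  Here `cEF` is the tensor product connection on `E ⊗ F`
(characterized by `hEF`), `NE`, `NF`, `NEF` are the tensorial higher covariant
derivatives on `E`, `F`, `E ⊗ F`, and the right-hand side is the linear map
`x ⊗ y ↦ (∇_x α) ⊗ (∇̄_y β)` applied to `Δ v`. -/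
theorem statement1
    {R : Type*} [CommRing R] [Algebra ℝ R]
    {V : Type*} [AddCommGroup V] [Module R V]
    {E : Type*} [AddCommGroup E] [Module R E]
    {F : Type*} [AddCommGroup F] [Module R F]
    {D : VFAct R V} (cT : Conn R V V D)
    (cE : Conn R V E D) (cF : Conn R V F D)
    (cEF : Conn R V (E ⊗[R] F) D)
    (hEF : ∀ (X : V) (α : E) (β : F),
      cEF.d X (α ⊗ₜ[R] β) = cE.d X α ⊗ₜ[R] β + α ⊗ₜ[R] cF.d X β)
    (cA : Conn R V (TensorAlgebra R V) D)
    (hA : IsDerivExt cT cA (TensorAlgebra.ι R))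
    (NE : TensorAlgebra R V →ₗ[R] E → E) (hNE : IsHigherDeriv cE cA NE)
    (NF : TensorAlgebra R V →ₗ[R] F → F) (hNF : IsHigherDeriv cF cA NF)
    (NEF : TensorAlgebra R V →ₗ[R] (E ⊗[R] F) → (E ⊗[R] F))
    (hNEF : IsHigherDeriv cEF cA NEF) :
    ∀ (v : TensorAlgebra R V) (α : E) (β : F),
      NEF v (α ⊗ₜ[R] β) =
        (TensorProduct.map
            ((LinearMap.proj α : (E → E) →ₗ[R] E).comp NE)
            ((LinearMap.proj β : (F → F) →ₗ[R] F).comp NF))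
          (comul R V v) := by
  intro v α β
  induction v using DirectSum.Decomposition.inductionOn
    (ℳ := fun n => LinearMap.range (TensorAlgebra.ι R : V →ₗ[R] TensorAlgebra R V) ^ n) with
  | zero => simp only [map_zero, Pi.zero_apply]
  | homogeneous v => exact hNEF.leibniz_of_mem_range_ι_pow hEF hA hNE hNF v.2 α β
  | add v w hv hw => simp only [map_add, Pi.add_apply, hv, hw]
end

section
/- Interior product formula: if X ∈ C∞(∧(E)), ω ∈ C∞(Hom(∧(E), F)), and v ∈ C∞(⊗^j TM), then ∇^j_v(ι_X ω) = ι_{∇^•_{v_{(1)}} X}(∇^{j−•}_{v_{(2)}} ω), where ι_X is the interior product (the operator on Hom(∧(E),F) dual to left wedge multiplication by X), Δv = v_{(1)} ⊗ v_{(2)} is the tensor coproduct in Sweedler notation, and • is the tensor degree of v_{(1)}. -/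
/-!
Algebraic framework for manifolds with connection:
`R` plays the role of the ring of smooth functions `C^∞(M)`,
`V` the `C^∞(M)`-module of smooth vector fields `C^∞(TM)`,
`VFAct` the action of vector fields on functions as derivations,
`Conn` a connection (covariant derivative) on the module of sections `E`
of a vector bundle, and `hcd` the higher covariant derivative defined
inductively by
`∇^{j+1}_{X₀,…,X_j} α = ∇_{X₀}(∇^j_{X₁,…,X_j} α) − Σ_k ∇^j_{X₁,…,∇̂_{X₀}X_k,…,X_j} α`.
-/

open TensorProduct

variable {R : Type*} [CommRing R] [Algebra ℝ R]
variable {V : Type*} [AddCommGroup V] [Module R V]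

/-! ### Auxiliary machinery for the proof of Statement 6 -/

section Statement6Aux

variable {R : Type*} [CommRing R] [Algebra ℝ R]
variable {V : Type*} [AddCommGroup V] [Module R V]

lemma Conn.d_zero_s6 {E : Type*} [AddCommGroup E] [Module R E] {D : VFAct R V}
    (cB : Conn R V E D) (X : V) : cB.d X 0 = 0 := by
  have h := cB.d_add_right X 0 0
  rw [add_zero] at h
  exact left_eq_add.mp h

lemma Conn.d_sub {E : Type*} [AddCommGroup E] [Module R E] {D : VFAct R V}
    (cB : Conn R V E D) (X : V) (α β : E) :
    cB.d X (α - β) = cB.d X α - cB.d X β := by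
  have h := cB.d_add_right X (α - β) β
  rw [sub_add_cancel] at h
  exact eq_sub_of_add_eq h.symm

lemma Conn.d_one {B : Type*} [Ring B] [Algebra R B] {D : VFAct R V}
    (cB : Conn R V B D)
    (hmul : ∀ X (a b : B), cB.d X (a * b) = cB.d X a * b + a * cB.d X b)
    (X : V) : cB.d X 1 = 0 := by
  have h := hmul X 1 1
  rw [one_mul, mul_one, one_mul] at h
  exact left_eq_add.mp h

/-- The filtration of the tensor algebra by spans of monomials of fixed length. -/
def s6Mon (R : Type*) (V : Type*) [CommRing R] [AddCommGroup V] [Module R V] :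
    ℕ → Submodule R (TensorAlgebra R V)
  | 0 => Submodule.span R {1}
  | n + 1 => Submodule.span R
      {z | ∃ y w, w ∈ s6Mon R V n ∧ z = TensorAlgebra.ι R y * w}

lemma s6Mon_succ_mem {n : ℕ} {w : TensorAlgebra R V} (hw : w ∈ s6Mon R V n) (y : V) :
    TensorAlgebra.ι R y * w ∈ s6Mon R V (n + 1) :=
  Submodule.subset_span ⟨y, w, hw, rfl⟩

lemma s6Mon_sup (v : TensorAlgebra R V) : v ∈ ⨆ n, s6Mon R V n := by
  set S := ⨆ n, s6Mon R V n with hS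
  have h1 : (1 : TensorAlgebra R V) ∈ S :=
    Submodule.mem_iSup_of_mem 0 (Submodule.subset_span rfl)
  have key : ∀ a : TensorAlgebra R V, ∀ s ∈ S, a * s ∈ S := by
    intro a
    induction a using TensorAlgebra.induction with
    | algebraMap r =>
      intro s hs
      rw [← Algebra.smul_def]
      exact Submodule.smul_mem _ _ hs
    | ι x =>
      intro s hs
      refine Submodule.iSup_induction (motive := fun s => TensorAlgebra.ι R x * s ∈ S) _ hs
        (fun n w hw => Submodule.mem_iSup_of_mem (n + 1) (s6Mon_succ_mem hw x)) ?_ ?_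
      · show TensorAlgebra.ι R x * 0 ∈ S
        rw [mul_zero]; exact Submodule.zero_mem _
      · intro u w hu hw
        show TensorAlgebra.ι R x * (u + w) ∈ S
        rw [mul_add]; exact Submodule.add_mem _ hu hw
    | mul a b ha hb =>
      intro s hs
      rw [mul_assoc]
      exact ha _ (hb s hs)
    | add a b ha hb =>
      intro s hs
      rw [add_mul]
      exact Submodule.add_mem _ (ha s hs) (hb s hs)
  simpa using key v 1 h1

lemma s6Mon_d {D : VFAct R V} {cT : Conn R V V D}
    {cA : Conn R V (TensorAlgebra R V) D}
    (hA : IsDerivExt cT cA (TensorAlgebra.ι R)) :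
    ∀ (n : ℕ) (X : V) (w : TensorAlgebra R V),
      w ∈ s6Mon R V n → cA.d X w ∈ s6Mon R V n := by
  intro n
  induction n with
  | zero =>
    intro X w hw
    refine Submodule.span_induction (p := fun w _ => cA.d X w ∈ s6Mon R V 0)
      ?_ ?_ ?_ ?_ hw
    · rintro x rfl
      rw [Conn.d_one cA hA.d_mul X]
      exact Submodule.zero_mem _
    · show cA.d X 0 ∈ _
      rw [Conn.d_zero_s6]; exact Submodule.zero_mem _
    · intro a b _ _ ha hb
      show cA.d X (a + b) ∈ _
      rw [cA.d_add_right]; exact Submodule.add_mem _ ha hb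
    · intro f w hwmem hdw
      show cA.d X (f • w) ∈ _
      rw [cA.d_smul_right]
      exact Submodule.add_mem _ (Submodule.smul_mem _ _ hwmem) (Submodule.smul_mem _ _ hdw)
  | succ n ih =>
    intro X w hw
    refine Submodule.span_induction (p := fun w _ => cA.d X w ∈ s6Mon R V (n + 1))
      ?_ ?_ ?_ ?_ hw
    · rintro z ⟨y, w, hwmem, rfl⟩
      rw [hA.d_mul, hA.d_gen]
      exact Submodule.add_mem _ (s6Mon_succ_mem hwmem _)
        (s6Mon_succ_mem (ih X w hwmem) _)
    · show cA.d X 0 ∈ _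
      rw [Conn.d_zero_s6]; exact Submodule.zero_mem _
    · intro a b _ _ ha hb
      show cA.d X (a + b) ∈ _
      rw [cA.d_add_right]; exact Submodule.add_mem _ ha hb
    · intro f w hwmem hdw
      show cA.d X (f • w) ∈ _
      rw [cA.d_smul_right]
      exact Submodule.add_mem _ (Submodule.smul_mem _ _ hwmem) (Submodule.smul_mem _ _ hdw)

/-- The tensor-product connection `d ⊗ 1 + 1 ⊗ d` on `T ⊗ T`, as an additive map. -/
noncomputable def s6tensorD {D : VFAct R V} (cA : Conn R V (TensorAlgebra R V) D) (y : V) :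
    (TensorAlgebra R V ⊗[R] TensorAlgebra R V) →+
      (TensorAlgebra R V ⊗[R] TensorAlgebra R V) :=
  TensorProduct.liftAddHom
    { toFun := fun a =>
        { toFun := fun b => cA.d y a ⊗ₜ[R] b + a ⊗ₜ[R] cA.d y b
          map_zero' := by simp [Conn.d_zero_s6]
          map_add' := fun b c => by
            rw [cA.d_add_right, TensorProduct.tmul_add, TensorProduct.tmul_add]
            abel }
      map_zero' := by
        ext b
        simp [Conn.d_zero_s6]
      map_add' := fun a c => by
        ext b
        simp only [AddMonoidHom.coe_mk, ZeroHom.coe_mk, AddMonoidHom.add_apply]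
        rw [cA.d_add_right, TensorProduct.add_tmul, TensorProduct.add_tmul]
        abel }
    (by
      intro f a b
      simp only [AddMonoidHom.coe_mk, ZeroHom.coe_mk]
      rw [cA.d_smul_right, cA.d_smul_right, TensorProduct.add_tmul, TensorProduct.tmul_add,
        TensorProduct.smul_tmul, TensorProduct.smul_tmul, TensorProduct.smul_tmul]
      abel)

@[simp] lemma s6tensorD_tmul {D : VFAct R V} (cA : Conn R V (TensorAlgebra R V) D) (y : V)
    (a b : TensorAlgebra R V) :
    s6tensorD cA y (a ⊗ₜ[R] b) = cA.d y a ⊗ₜ[R] b + a ⊗ₜ[R] cA.d y b := rfl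

lemma s6tensorD_mul {D : VFAct R V} {cT : Conn R V V D}
    {cA : Conn R V (TensorAlgebra R V) D}
    (hA : IsDerivExt cT cA (TensorAlgebra.ι R)) (y : V)
    (s t : TensorAlgebra R V ⊗[R] TensorAlgebra R V) :
    s6tensorD cA y (s * t) = s6tensorD cA y s * t + s * s6tensorD cA y t := by
  induction s using TensorProduct.induction_on with
  | zero => simp
  | tmul a b =>
    induction t using TensorProduct.induction_on with
    | zero => simp
    | tmul c d =>
      rw [Algebra.TensorProduct.tmul_mul_tmul, s6tensorD_tmul, s6tensorD_tmul, s6tensorD_tmul,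
        hA.d_mul, hA.d_mul, TensorProduct.add_tmul, TensorProduct.tmul_add,
        add_mul, mul_add, Algebra.TensorProduct.tmul_mul_tmul,
        Algebra.TensorProduct.tmul_mul_tmul, Algebra.TensorProduct.tmul_mul_tmul,
        Algebra.TensorProduct.tmul_mul_tmul]
      abel
    | add t₁ t₂ h₁ h₂ =>
      simp only [mul_add, add_mul, map_add, h₁, h₂]
      abel
  | add s₁ s₂ h₁ h₂ =>
    simp only [mul_add, add_mul, map_add, h₁, h₂]
    abel

lemma s6comul_ι (x : V) :
    comul R V (TensorAlgebra.ι R x) =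
      TensorAlgebra.ι R x ⊗ₜ[R] 1 + 1 ⊗ₜ[R] TensorAlgebra.ι R x := by
  simp [comul, TensorAlgebra.lift_ι_apply]

lemma s6comul_d {D : VFAct R V} {cT : Conn R V V D}
    {cA : Conn R V (TensorAlgebra R V) D}
    (hA : IsDerivExt cT cA (TensorAlgebra.ι R)) (y : V)
    (v : TensorAlgebra R V) :
    comul R V (cA.d y v) = s6tensorD cA y (comul R V v) := by
  induction v using TensorAlgebra.induction with
  | algebraMap r =>
    have h1 : cA.d y (1 : TensorAlgebra R V) = 0 := Conn.d_one cA hA.d_mul y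
    have hd : cA.d y (algebraMap R (TensorAlgebra R V) r) = D.act y r • 1 := by
      rw [Algebra.algebraMap_eq_smul_one, cA.d_smul_right, h1, smul_zero, add_zero]
    rw [hd, map_smul, map_one, (comul R V).commutes, Algebra.algebraMap_eq_smul_one,
      Algebra.TensorProduct.one_def, TensorProduct.smul_tmul' r, s6tensorD_tmul,
      cA.d_smul_right, h1, smul_zero, add_zero, TensorProduct.tmul_zero, add_zero]
    exact TensorProduct.smul_tmul' _ _ _
  | ι x =>
    rw [hA.d_gen, s6comul_ι, s6comul_ι, map_add, s6tensorD_tmul, s6tensorD_tmul,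
      Conn.d_one cA hA.d_mul y, hA.d_gen, TensorProduct.tmul_zero, TensorProduct.zero_tmul,
      add_zero, zero_add]
  | mul a b ha hb =>
    rw [hA.d_mul, map_add, map_mul, map_mul, ha, hb, map_mul, s6tensorD_mul hA]
  | add a b ha hb =>
    rw [cA.d_add_right, map_add, map_add, ha, hb, map_add]

end Statement6Aux
/-- Interior product formula.  Here `ExteriorAlgebra R E` plays the
role of `C^∞(∧(E))` (with `cW` the Leibniz extension of the connection on `E`), the
Hom-bundle `Hom(∧(E),F)` carries the induced connection `cH`, and the interior product
of `X ∈ C^∞(∧(E))` with `ω ∈ C^∞(Hom(∧(E),F))` is `ι_X ω = ω ∘ (X ∧ ·)`, i.e.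
`ω.comp (LinearMap.mulLeft R X)`.  Then
`∇^j_v (ι_X ω) = ι_{∇^•_{v₍₁₎} X}(∇^{j−•}_{v₍₂₎} ω)`; the right-hand side is the
linear map `x ⊗ y ↦ (∇_y ω) ∘ ((∇_x X) ∧ ·)` applied to the tensor coproduct `Δ v`. -/
theorem statement6
    {R : Type*} [CommRing R] [Algebra ℝ R]
    {V : Type*} [AddCommGroup V] [Module R V]
    {E : Type*} [AddCommGroup E] [Module R E]
    {F : Type*} [AddCommGroup F] [Module R F]
    {D : VFAct R V} (cT : Conn R V V D)
    (cE : Conn R V E D) (cF : Conn R V F D)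
    (cW : Conn R V (ExteriorAlgebra R E) D)
    (hW : IsDerivExt cE cW (ExteriorAlgebra.ι R))
    (cH : Conn R V (ExteriorAlgebra R E →ₗ[R] F) D) (hH : IsHomConn cW cF cH)
    (cA : Conn R V (TensorAlgebra R V) D)
    (hA : IsDerivExt cT cA (TensorAlgebra.ι R))
    (NW : TensorAlgebra R V →ₗ[R] ExteriorAlgebra R E → ExteriorAlgebra R E)
    (hNW : IsHigherDeriv cW cA NW)
    (NH : TensorAlgebra R V →ₗ[R]
      (ExteriorAlgebra R E →ₗ[R] F) → (ExteriorAlgebra R E →ₗ[R] F))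
    (hNH : IsHigherDeriv cH cA NH) :
    ∀ (v : TensorAlgebra R V) (X : ExteriorAlgebra R E)
      (ω : ExteriorAlgebra R E →ₗ[R] F),
      NH v (ω.comp (LinearMap.mulLeft R X)) =
        ((TensorProduct.lift
            ((LinearMap.llcomp R (ExteriorAlgebra R E) (ExteriorAlgebra R E) F).flip)).comp
          (TensorProduct.map
            ((LinearMap.mul R (ExteriorAlgebra R E)).comp
              ((LinearMap.proj X :
                  (ExteriorAlgebra R E → ExteriorAlgebra R E) →ₗ[R]
                    ExteriorAlgebra R E).comp NW))
            ((LinearMap.proj ω :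
                ((ExteriorAlgebra R E →ₗ[R] F) → (ExteriorAlgebra R E →ₗ[R] F)) →ₗ[R]
                  (ExteriorAlgebra R E →ₗ[R] F)).comp NH)))
          (comul R V v) := by
  classical
  intro v X ω
  set G : TensorAlgebra R V ⊗[R] TensorAlgebra R V →ₗ[R] (ExteriorAlgebra R E →ₗ[R] F) :=
    ((TensorProduct.lift
        ((LinearMap.llcomp R (ExteriorAlgebra R E) (ExteriorAlgebra R E) F).flip)).comp
      (TensorProduct.map
        ((LinearMap.mul R (ExteriorAlgebra R E)).comp
          ((LinearMap.proj X :
              (ExteriorAlgebra R E → ExteriorAlgebra R E) →ₗ[R]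
                ExteriorAlgebra R E).comp NW))
        ((LinearMap.proj ω :
            ((ExteriorAlgebra R E →ₗ[R] F) → (ExteriorAlgebra R E →ₗ[R] F)) →ₗ[R]
              (ExteriorAlgebra R E →ₗ[R] F)).comp NH))) with hGdef
  -- `G` on pure tensors
  have hG' : ∀ a b : TensorAlgebra R V,
      G (a ⊗ₜ[R] b) = (NH b ω).comp (LinearMap.mulLeft R (NW a X)) := by
    intro a b
    refine LinearMap.ext fun α => ?_
    simp [hGdef, TensorProduct.lift.tmul, LinearMap.llcomp_apply, LinearMap.mul_apply']
  -- product rule for the Hom connection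
  have hprod : ∀ (y : V) (T' : ExteriorAlgebra R E →ₗ[R] F) (Z : ExteriorAlgebra R E),
      cH.d y (T'.comp (LinearMap.mulLeft R Z)) =
        (cH.d y T').comp (LinearMap.mulLeft R Z) +
          T'.comp (LinearMap.mulLeft R (cW.d y Z)) := by
    intro y T' Z
    refine LinearMap.ext fun α => ?_
    have e1 := hH y (T'.comp (LinearMap.mulLeft R Z)) α
    have e2 := hH y T' (Z * α)
    simp only [LinearMap.add_apply, LinearMap.coe_comp, Function.comp_apply,
      LinearMap.mulLeft_apply] at e1 e2 ⊢
    rw [e1, e2, hW.d_mul, map_add]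
    abel
  -- key lemma
  have hK : ∀ (y : V) (t : TensorAlgebra R V ⊗[R] TensorAlgebra R V),
      G ((TensorAlgebra.ι R y ⊗ₜ[R] 1 + 1 ⊗ₜ[R] TensorAlgebra.ι R y) * t) =
        cH.d y (G t) - G (s6tensorD cA y t) := by
    intro y t
    induction t using TensorProduct.induction_on with
    | zero => simp [Conn.d_zero_s6]
    | tmul a b =>
      rw [add_mul, Algebra.TensorProduct.tmul_mul_tmul, Algebra.TensorProduct.tmul_mul_tmul,
        one_mul, one_mul, map_add, s6tensorD_tmul, map_add]
      simp only [hG']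
      rw [hNW.n_mul_ι, hNH.n_mul_ι, hprod y (NH b ω) (NW a X)]
      refine LinearMap.ext fun α => ?_
      simp only [LinearMap.add_apply, LinearMap.sub_apply, LinearMap.coe_comp,
        Function.comp_apply, LinearMap.mulLeft_apply, sub_mul, map_sub]
      abel
    | add t₁ t₂ h₁ h₂ =>
      simp only [mul_add, map_add, h₁, h₂, cH.d_add_right]
      abel
  -- the statement over the monomial filtration
  have main : ∀ (n : ℕ) (w : TensorAlgebra R V), w ∈ s6Mon R V n →
      NH w (ω.comp (LinearMap.mulLeft R X)) = G (comul R V w) := by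
    intro n
    induction n with
    | zero =>
      intro w hw
      refine Submodule.span_induction
        (p := fun w _ => NH w (ω.comp (LinearMap.mulLeft R X)) = G (comul R V w))
        ?_ ?_ ?_ ?_ hw
      · rintro w rfl
        have h1 : NH (1 : TensorAlgebra R V) (ω.comp (LinearMap.mulLeft R X)) =
            ω.comp (LinearMap.mulLeft R X) := by
          simpa using hNH.n_algebraMap 1 (ω.comp (LinearMap.mulLeft R X))
        have h2 : NW (1 : TensorAlgebra R V) X = X := by simpa using hNW.n_algebraMap 1 X
        have h3 : NH (1 : TensorAlgebra R V) ω = ω := by simpa using hNH.n_algebraMap 1 ω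
        rw [h1, map_one, Algebra.TensorProduct.one_def, hG', h2, h3]
      · show NH (0 : TensorAlgebra R V) (ω.comp (LinearMap.mulLeft R X)) = G (comul R V 0)
        simp
      · intro a b _ _ ha hb
        rw [map_add, Pi.add_apply, ha, hb, map_add, map_add]
      · intro f w _ hw
        rw [map_smul, Pi.smul_apply, hw, map_smul, map_smul]
    | succ n ih =>
      intro w hw
      refine Submodule.span_induction
        (p := fun w _ => NH w (ω.comp (LinearMap.mulLeft R X)) = G (comul R V w))
        ?_ ?_ ?_ ?_ hw
      · rintro z ⟨y, w, hwmem, rfl⟩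
        rw [hNH.n_mul_ι y w (ω.comp (LinearMap.mulLeft R X)), ih w hwmem,
          ih _ (s6Mon_d hA n y w hwmem), s6comul_d hA y w, ← hK y (comul R V w),
          map_mul (comul R V) (TensorAlgebra.ι R y) w, s6comul_ι]
      · show NH (0 : TensorAlgebra R V) (ω.comp (LinearMap.mulLeft R X)) = G (comul R V 0)
        simp
      · intro a b _ _ ha hb
        rw [map_add, Pi.add_apply, ha, hb, map_add, map_add]
      · intro f w _ hw
        rw [map_smul, Pi.smul_apply, hw, map_smul, map_smul]
  refine Submodule.iSup_induction (s6Mon R V)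
    (motive := fun v => NH v (ω.comp (LinearMap.mulLeft R X)) = G (comul R V v))
    (s6Mon_sup v) main ?_ ?_
  · show NH (0 : TensorAlgebra R V) (ω.comp (LinearMap.mulLeft R X)) = G (comul R V 0)
    simp
  · intro a b ha hb
    rw [map_add, Pi.add_apply, ha, hb, map_add, map_add]
end

section
/- Fourth-order commutation identity: if the connection ∇̂ on TM is torsion-free, then for all smooth vector fields a, b, c, d on M, one has the equality of operators on C∞(E): ∇^4_{(a⊗b − b⊗a)⊗(c⊗d − d⊗c)} = R^E_{a,b} ∘ R^E_{c,d} − R^E_{R^{TM}_{a,b}(c⊗d)}, where R^{TM}_{a,b} acts on c⊗d as a derivation (R^{TM}_{a,b}(c⊗d) = (R^{TM}_{a,b}c)⊗d + c⊗(R^{TM}_{a,b}d)) and R^E_{u⊗v} denotes R^E_{u,v} extended linearly in u⊗v. -/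
/-!
Algebraic framework for manifolds with connection:
`R` plays the role of the ring of smooth functions `C^∞(M)`,
`V` the `C^∞(M)`-module of smooth vector fields `C^∞(TM)`,
`VFAct` the action of vector fields on functions as derivations,
`Conn` a connection (covariant derivative) on the module of sections `E`
of a vector bundle, and `hcd` the higher covariant derivative defined
inductively by
`∇^{j+1}_{X₀,…,X_j} α = ∇_{X₀}(∇^j_{X₁,…,X_j} α) − Σ_k ∇^j_{X₁,…,∇̂_{X₀}X_k,…,X_j} α`.
-/

open TensorProduct

variable {R : Type*} [CommRing R] [Algebra ℝ R]
variable {V : Type*} [AddCommGroup V] [Module R V]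

/-- The curvature operator `R^E_{X,Y} = ∇²_{X,Y} − ∇²_{Y,X}` on `C^∞(E)`. -/
def curv {R : Type*} [CommRing R] [Algebra ℝ R]
    {V : Type*} [AddCommGroup V] [Module R V]
    {E : Type*} [AddCommGroup E] [Module R E] {D : VFAct R V}
    (cT : Conn R V V D) (cE : Conn R V E D) (X Y : V) (α : E) : E :=
  hcd cT cE 2 ![X, Y] α - hcd cT cE 2 ![Y, X] α

/-!
Antisymmetrizing `∇^{k+2}α` in its first two slots is the Ricci identity for the tensor `∇^kα`:
expanding twice by the recursive definition, the mixed terms `∇_a ∇^k_{…,∇̂_b X_i,…}α` and the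
double updates at distinct slots are symmetric in `a, b` and cancel, leaving `R^E_{a,b}` acting on
the value and `−R^{TM}_{a,b}` acting on each argument (by additivity of `∇^k` in each slot).
For `k = 2`, antisymmetrizing once more in `c, d` gives the identity.
-/

theorem Matrix.update_vecCons_zero {α : Type*} {n : ℕ} (x : α) (v : Fin n → α) (w : α) :
    Function.update (Matrix.vecCons x v) 0 w = Matrix.vecCons w v :=
  Fin.update_cons_zero (α := fun _ => α) x v w

theorem Matrix.update_vecCons_succ {α : Type*} {n : ℕ} (x : α) (v : Fin n → α) (i : Fin n) (w : α) :
    Function.update (Matrix.vecCons x v) i.succ w = Matrix.vecCons x (Function.update v i w) :=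
  (Fin.cons_update (α := fun _ => α) x v i w).symm

theorem Finset.sum_sum_update_update_sub_swap {ι M G : Type*} [Fintype ι] [DecidableEq ι]
    [AddCommGroup G] (F : (ι → M) → G) (f g : M → M) (X : ι → M) :
    ∑ i, ∑ j, F (Function.update (Function.update X i (f (X i))) j
        (g (Function.update X i (f (X i)) j)))
      - ∑ i, ∑ j, F (Function.update (Function.update X i (g (X i))) j
        (f (Function.update X i (g (X i)) j))) =
      ∑ i, (F (Function.update X i (g (f (X i)))) - F (Function.update X i (f (g (X i))))) := by
  -- off-diagonal terms cancel because updates at distinct slots commute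
  rw [Finset.sum_comm (γ := ι) (f := fun i j =>
      F (Function.update (Function.update X i (g (X i))) j (f (Function.update X i (g (X i)) j)))),
    ← Finset.sum_sub_distrib]
  refine Finset.sum_congr rfl fun i _ => ?_
  rw [← Finset.sum_sub_distrib, Finset.sum_eq_single i]
  · simp only [Function.update_idem, Function.update_self]
  · intro j _ hji
    rw [Function.update_of_ne hji, Function.update_of_ne hji.symm,
      Function.update_comm hji.symm, sub_self]
  · exact fun h => absurd (Finset.mem_univ i) h

section Ricci

variable {E : Type*} [AddCommGroup E] [Module R E] {D : VFAct R V}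
  (cT : Conn R V V D) (cE : Conn R V E D)

def Conn.toAddMonoidHom (X : V) : E →+ E := AddMonoidHom.mk' (cE.d X) (cE.d_add_right X)

theorem Conn.d_sub_right (X : V) (α β : E) : cE.d X (α - β) = cE.d X α - cE.d X β :=
  (cE.toAddMonoidHom X).map_sub α β

theorem Conn.d_sum_right {ι : Type*} (s : Finset ι) (X : V) (α : ι → E) :
    cE.d X (∑ i ∈ s, α i) = ∑ i ∈ s, cE.d X (α i) :=
  map_sum (cE.toAddMonoidHom X) α s

theorem hcd_cons {k : ℕ} (x : V) (X : Fin k → V) (α : E) :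
    hcd cT cE (k + 1) (Fin.cons x X) α =
      cE.d x (hcd cT cE k X α) - ∑ i, hcd cT cE k (Function.update X i (cT.d x (X i))) α :=
  rfl

theorem hcd_two (x y : V) (α : E) :
    hcd cT cE 2 ![x, y] α = cE.d x (cE.d y α) - cE.d (cT.d x y) α := by
  simp [hcd]

theorem hcd_update_add {k : ℕ} (X : Fin k → V) (i : Fin k) (u v : V) (α : E) :
    hcd cT cE k (Function.update X i (u + v)) α =
      hcd cT cE k (Function.update X i u) α + hcd cT cE k (Function.update X i v) α := by
  induction k generalizing u v with
  | zero => exact i.elim0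
  | succ k ih =>
    induction X using Fin.consCases with
    | cons x X =>
    induction i using Fin.cases with
    | zero =>
      simp only [Fin.update_cons_zero, hcd_cons, cE.d_add_left, cT.d_add_left, ih,
        Finset.sum_add_distrib]
      abel
    | succ j =>
      have h_term (l : Fin k) :
          hcd cT cE k (Function.update (Function.update X j (u + v)) l
              (cT.d x (Function.update X j (u + v) l))) α =
            hcd cT cE k (Function.update (Function.update X j u) l
              (cT.d x (Function.update X j u l))) α +
            hcd cT cE k (Function.update (Function.update X j v) l
              (cT.d x (Function.update X j v l))) α := by
        obtain rfl | hlj := eq_or_ne l j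
        · simp only [Function.update_idem, Function.update_self, cT.d_add_right, ih]
        · have h_comm (w : V) := Function.update_comm hlj.symm w (cT.d x (X l)) X
          simp only [Function.update_of_ne hlj, h_comm, ih]
      simp only [← Fin.cons_update, hcd_cons, ih, cE.d_add_right, h_term, Finset.sum_add_distrib]
      abel

theorem hcd_update_sub {k : ℕ} (X : Fin k → V) (i : Fin k) (u v : V) (α : E) :
    hcd cT cE k (Function.update X i (u - v)) α =
      hcd cT cE k (Function.update X i u) α - hcd cT cE k (Function.update X i v) α :=
  (AddMonoidHom.mk' (fun w => hcd cT cE k (Function.update X i w) α)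
    (hcd_update_add cT cE X i · · α)).map_sub u v

theorem hcd_cons_cons {k : ℕ} (a b : V) (X : Fin k → V) (α : E) :
    hcd cT cE (k + 2) (Fin.cons a (Fin.cons b X)) α =
      cE.d a (cE.d b (hcd cT cE k X α)) - cE.d (cT.d a b) (hcd cT cE k X α)
        - ∑ i, cE.d a (hcd cT cE k (Function.update X i (cT.d b (X i))) α)
        - ∑ i, cE.d b (hcd cT cE k (Function.update X i (cT.d a (X i))) α)
        + ∑ i, hcd cT cE k (Function.update X i (cT.d (cT.d a b) (X i))) α
        + ∑ i, ∑ j, hcd cT cE k (Function.update (Function.update X i (cT.d a (X i))) j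
            (cT.d b (Function.update X i (cT.d a (X i)) j))) α := by
  rw [hcd_cons, Fin.sum_univ_succ]
  simp only [Fin.update_cons_zero, ← Fin.cons_update, hcd_cons, Fin.cons_zero, Fin.cons_succ,
    cE.d_sub_right, cE.d_sum_right, Finset.sum_sub_distrib]
  abel

theorem hcd_cons_cons_sub_swap {k : ℕ} (a b : V) (X : Fin k → V) (α : E) :
    hcd cT cE (k + 2) (Fin.cons a (Fin.cons b X)) α
        - hcd cT cE (k + 2) (Fin.cons b (Fin.cons a X)) α =
      curv cT cE a b (hcd cT cE k X α)
        - ∑ i, hcd cT cE k (Function.update X i (curv cT cT a b (X i))) α := by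
  have h_double := Finset.sum_sum_update_update_sub_swap (fun Y => hcd cT cE k Y α)
    (cT.d a) (cT.d b) X
  simp only [hcd_cons_cons, curv, hcd_two, hcd_update_sub, Finset.sum_sub_distrib] at h_double ⊢
  linear_combination (norm := abel) h_double

end Ricci

/-- The left-hand side is `∇^4_{(a⊗b − b⊗a)⊗(c⊗d − d⊗c)}` expanded by linearity; the last two
terms are `R^E_{R^{TM}_{a,b}(c⊗d)}`, with `R^{TM}_{a,b}` acting on `c ⊗ d` as a derivation. -/
theorem statement9_general
    {R : Type*} [CommRing R] [Algebra ℝ R]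
    {V : Type*} [AddCommGroup V] [Module R V]
    {E : Type*} [AddCommGroup E] [Module R E]
    {D : VFAct R V} (cT : Conn R V V D) (cE : Conn R V E D) :
    ∀ (a b c d : V) (α : E),
      hcd cT cE 4 ![a, b, c, d] α - hcd cT cE 4 ![b, a, c, d] α
          - hcd cT cE 4 ![a, b, d, c] α + hcd cT cE 4 ![b, a, d, c] α =
        curv cT cE a b (curv cT cE c d α)
          - curv cT cE (curv cT cT a b c) d α
          - curv cT cE c (curv cT cT a b d) α := by
  intro a b c d α
  have h_cd : hcd cT cE 4 ![a, b, c, d] α - hcd cT cE 4 ![b, a, c, d] α = _ :=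
    hcd_cons_cons_sub_swap cT cE a b ![c, d] α
  have h_dc : hcd cT cE 4 ![a, b, d, c] α - hcd cT cE 4 ![b, a, d, c] α = _ :=
    hcd_cons_cons_sub_swap cT cE a b ![d, c] α
  rw [Fin.sum_univ_succ, Fin.sum_univ_one] at h_cd h_dc
  simp only [Matrix.update_vecCons_zero, Matrix.update_vecCons_succ, Matrix.cons_val_zero,
    Matrix.cons_val_succ] at h_cd h_dc
  simp only [curv, hcd_two, cE.d_sub_right] at h_cd h_dc ⊢
  linear_combination (norm := abel) h_cd - h_dc

/-- Fourth-order commutation identity.  If `∇̂` is torsion-free then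
for all vector fields `a b c d`:
`∇^4_{(a⊗b − b⊗a) ⊗ (c⊗d − d⊗c)} = R^E_{a,b} ∘ R^E_{c,d} − R^E_{R^{TM}_{a,b}(c⊗d)}`,
where the left-hand side is expanded by linearity as the signed sum of the four
higher covariant derivatives, `R^{TM}_{a,b}` acts on `c ⊗ d` as a derivation, and
`R^E_{u⊗v} = R^E_{u,v}` extended linearly, so the last term is
`R^E_{R^{TM}_{a,b}c, d} + R^E_{c, R^{TM}_{a,b}d}`. -/
theorem statement9
    {R : Type*} [CommRing R] [Algebra ℝ R]
    {V : Type*} [AddCommGroup V] [Module R V]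
    {E : Type*} [AddCommGroup E] [Module R E]
    {D : VFAct R V} (cT : Conn R V V D) (cE : Conn R V E D)
    (htf : TorsionFree cT) :
    ∀ (a b c d : V) (α : E),
      hcd cT cE 4 ![a, b, c, d] α - hcd cT cE 4 ![b, a, c, d] α
          - hcd cT cE 4 ![a, b, d, c] α + hcd cT cE 4 ![b, a, d, c] α =
        curv cT cE a b (curv cT cE c d α)
          - curv cT cE (curv cT cT a b c) d α
          - curv cT cE c (curv cT cT a b d) α :=
  statement9_general cT cE
end
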